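/- Let a = (a₁,a₂,a₃), b = (b₁,b₂,b₃) ∈ ℤ³ satisfy the Eschenburg freeness condition and a₁+a₂+a₃ = b₁+b₂+b₃, and let c ∈ ℤ with |c| > 1. Then the set of integers { |σ₃(q_{c^α})| : α ∈ ℕ, α ≥ 1 } is infinite. -/

import Mathlib

/-- The `k`-th elementary symmetric polynomial of the entries of a tuple `x : Fin n → ℤ`. -/
def esymm {n : ℕ} (k : ℕ) (x : Fin n → ℤ) : ℤ :=
  ∑ s ∈ Finset.powersetCard k (Finset.univ : Finset (Fin n)), ∏ i ∈ s, x i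

/-- For integer triples `a`, `b` and `e : ℤ`, the 6-tuple
`q_e = (2(a₁+e)+1, 2(a₂+e)+1, 2(a₃+e)+1, −2(b₁+e)−1, −2(b₂+e)−1, −2(b₃+e)−1)`. -/
def qTuple (a b : Fin 3 → ℤ) (e : ℤ) : Fin 6 → ℤ :=
  ![2 * (a 0 + e) + 1, 2 * (a 1 + e) + 1, 2 * (a 2 + e) + 1,
    -2 * (b 0 + e) - 1, -2 * (b 1 + e) - 1, -2 * (b 2 + e) - 1]

/-!
Since `a₁+a₂+a₃ = b₁+b₂+b₃`, the quadratic and cubic terms in `e` cancel and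
`σ₃(q_e) = σ₃(q_0) + 16 (σ₂(b) − σ₂(a)) e`. Modulo 2, a triple is determined up to order by
`σ₁` and `σ₂`, so `σ₂(a) = σ₂(b)` would give a permutation with `aᵢ ≡ b_{σ(i)}`, making both
entries of an Eschenburg gcd even. Hence the slope is nonzero and `|σ₃(q_{c^α})| → ∞`.
-/

open Filter

namespace Multiset

variable {R : Type*} [CommSemiring R]

lemma esymm_zero_right (s : Multiset R) : s.esymm 0 = 1 := by
  simp [esymm, powersetCard_zero_left]

lemma esymm_zero_left_succ (k : ℕ) : (0 : Multiset R).esymm (k + 1) = 0 := by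
  simp [esymm, powersetCard_zero_right]

lemma esymm_cons_succ (a : R) (s : Multiset R) (k : ℕ) :
    (a ::ₘ s).esymm (k + 1) = s.esymm (k + 1) + a * s.esymm k := by
  simp [esymm, powersetCard_cons, sum_map_mul_left]

end Multiset

lemma esymm_eq_multiset_esymm {n : ℕ} (k : ℕ) (x : Fin n → ℤ) :
    esymm k x = Multiset.esymm (List.ofFn x : Multiset ℤ) k := by
  rw [esymm, ← Finset.esymm_map_val, Fin.univ_val_map]

lemma esymm_two_fin_three (x : Fin 3 → ℤ) :
    esymm 2 x = x 0 * x 1 + x 0 * x 2 + x 1 * x 2 := by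
  simp only [esymm_eq_multiset_esymm, List.ofFn_succ, List.ofFn_zero, ← Multiset.cons_coe,
    Multiset.coe_nil, Multiset.esymm_cons_succ, Multiset.esymm_zero_right,
    Multiset.esymm_zero_left_succ, Fin.succ_zero_eq_one, Fin.succ_one_eq_two]
  ring

lemma esymm_three_fin_six (x : Fin 6 → ℤ) :
    esymm 3 x = x 0 * x 1 * x 2 + x 0 * x 1 * x 3 + x 0 * x 1 * x 4 + x 0 * x 1 * x 5
      + x 0 * x 2 * x 3 + x 0 * x 2 * x 4 + x 0 * x 2 * x 5 + x 0 * x 3 * x 4 + x 0 * x 3 * x 5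
      + x 0 * x 4 * x 5 + x 1 * x 2 * x 3 + x 1 * x 2 * x 4 + x 1 * x 2 * x 5 + x 1 * x 3 * x 4
      + x 1 * x 3 * x 5 + x 1 * x 4 * x 5 + x 2 * x 3 * x 4 + x 2 * x 3 * x 5 + x 2 * x 4 * x 5
      + x 3 * x 4 * x 5 := by
  simp only [esymm_eq_multiset_esymm, List.ofFn_succ, List.ofFn_zero, ← Multiset.cons_coe,
    Multiset.coe_nil, Multiset.esymm_cons_succ, Multiset.esymm_zero_right,
    Multiset.esymm_zero_left_succ, Fin.succ_zero_eq_one, Fin.succ_one_eq_two, Fin.reduceSucc]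
  ring

lemma esymm_three_qTuple {a b : Fin 3 → ℤ} (hsum : a 0 + a 1 + a 2 = b 0 + b 1 + b 2) (e : ℤ) :
    esymm 3 (qTuple a b e) = esymm 3 (qTuple a b 0) + 16 * (esymm 2 b - esymm 2 a) * e := by
  simp only [esymm_three_fin_six, esymm_two_fin_three, qTuple, Matrix.cons_val_zero,
    Matrix.cons_val_one, Matrix.cons_val, add_zero]
  linear_combination (-16 * (e ^ 2 + e)) * hsum

lemma ZMod.two_exists_perm_of_sum_eq_of_sum_mul_eq (x y : Fin 3 → ZMod 2)
    (h₁ : x 0 + x 1 + x 2 = y 0 + y 1 + y 2)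
    (h₂ : x 0 * x 1 + x 0 * x 2 + x 1 * x 2 = y 0 * y 1 + y 0 * y 2 + y 1 * y 2) :
    ∃ σ : Equiv.Perm (Fin 3), ∀ i, x i = y (σ i) := by
  revert x y
  decide

lemma esymm_two_ne_of_gcd_eq_one {a b : Fin 3 → ℤ}
    (hfree : ∀ σ : Equiv.Perm (Fin 3), Int.gcd (a 0 - b (σ 0)) (a 1 - b (σ 1)) = 1)
    (hsum : a 0 + a 1 + a 2 = b 0 + b 1 + b 2) :
    esymm 2 a ≠ esymm 2 b := by
  intro h
  rw [esymm_two_fin_three, esymm_two_fin_three] at h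
  obtain ⟨σ, hσ⟩ := ZMod.two_exists_perm_of_sum_eq_of_sum_mul_eq (fun i => (a i : ZMod 2))
    (fun i => (b i : ZMod 2)) (by exact_mod_cast congrArg (Int.cast : ℤ → ZMod 2) hsum)
    (by exact_mod_cast congrArg (Int.cast : ℤ → ZMod 2) h)
  have hdvd (i : Fin 3) : (2 : ℤ) ∣ a i - b (σ i) := by
    simpa [dvd_sub_comm] using (ZMod.intCast_eq_intCast_iff_dvd_sub _ _ 2).1 (hσ i)
  have := Int.dvd_coe_gcd (hdvd 0) (hdvd 1)
  rw [hfree σ] at this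
  norm_num at this

lemma tendsto_abs_add_mul_pow_atTop {R : Type*} [Ring R] [LinearOrder R] [IsStrictOrderedRing R]
    [Archimedean R] (p : R) {k c : R} (hk : k ≠ 0) (hc : 1 < |c|) :
    Tendsto (fun n : ℕ => |p + k * c ^ n|) atTop atTop := by
  refine tendsto_atTop_mono (fun n => ?_) <| tendsto_atTop_add_const_right _ (-|p|) <|
    (tendsto_pow_atTop_atTop_of_one_lt hc).const_mul_atTop' (abs_pos.2 hk)
  calc |k| * |c| ^ n + -|p| = |k * c ^ n| - |p| := by rw [abs_mul, abs_pow, sub_eq_add_neg]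
    _ ≤ |k * c ^ n + p| := abs_sub_abs_le_abs_add _ _
    _ = |p + k * c ^ n| := by rw [add_comm]

/-- **Corollary: infinitely many homotopy types.** If `a`, `b` satisfy the
Eschenburg freeness condition and `a₁+a₂+a₃ = b₁+b₂+b₃`, and `c ∈ ℤ` with `|c| > 1`, then
the set `{ |σ₃(q_{c^α})| : α ≥ 1 }` is infinite. -/
theorem infinitely_many_abs_esymm (a b : Fin 3 → ℤ)
    (hfree : ∀ σ : Equiv.Perm (Fin 3), Int.gcd (a 0 - b (σ 0)) (a 1 - b (σ 1)) = 1)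
    (hsum : a 0 + a 1 + a 2 = b 0 + b 1 + b 2)
    (c : ℤ) (hc : 1 < |c|) :
    {v : ℤ | ∃ α : ℕ, 1 ≤ α ∧ v = |esymm 3 (qTuple a b (c ^ α))|}.Infinite := by
  have hslope : 16 * (esymm 2 b - esymm 2 a) ≠ 0 :=
    mul_ne_zero (by norm_num) (sub_ne_zero.2 (esymm_two_ne_of_gcd_eq_one hfree hsum).symm)
  have htends := tendsto_abs_add_mul_pow_atTop (esymm 3 (qTuple a b 0)) hslope hc
  refine Set.infinite_of_not_bddAbove fun ⟨M, hM⟩ => ?_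
  obtain ⟨α, hαM, hα⟩ := ((htends.eventually_gt_atTop M).and (eventually_ge_atTop 1)).exists
  exact (hM ⟨α, hα, by rw [esymm_three_qTuple hsum (c ^ α)]⟩).not_gt hαM
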